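/- arXiv:1707.09771 — 3 statements merged into one kernel-verified Lean document; each statement's English description precedes it below -/
import Mathlib

section
/- The functions u₁(t) = (1 - e^{-t} + te^{-t/2})/(1 + e^{-t/2}) and u₂(t) = (1 - e^{-t} - te^{-t/2})/(1 - e^{-t/2}) (with u₂(0) := 0) are both positive for all t > 0, and satisfy the asymptotics u₁(t) = t + O(t²) and u₂(t) = t²/12 + O(t³) as t → 0, and u₁(t) → 1, u₂(t) → 1 as t → +∞. -/
open Filter Asymptotics Topology

/-!
Multiplying numerator and denominator by `exp (t / 2)` turns `u₂` into
`(2 sinh (t/2) - t) / (exp (t/2) - 1)`, which is positive because `sinh x > x` for `x > 0`.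
With `x = t / 2`, `u₂ t - t ^ 2 / 12` is `(2 sinh x - 2 x - x² (eˣ - 1) / 3) / (eˣ - 1)`; the Taylor
expansion of `exp` to order four makes the numerator `O(x⁴)`, and `eˣ - 1 ≥ x`.
For `u₁`, `u₁ t - t = (1 - e⁻ᵗ - t) / (1 + e^(-t/2))` is `O(t²)` by the order-two expansion.
-/

section

open Real

lemma div_one_sub_exp_neg_half_eq (t : ℝ) :
    (1 - exp (-t) - t * exp (-t / 2)) / (1 - exp (-t / 2))
      = (2 * sinh (t / 2) - t) / (exp (t / 2) - 1) := by
  have h : exp (-t / 2) * exp (t / 2) = 1 := by rw [← exp_add]; ring_nf; exact exp_zero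
  have h2 : exp (-t) = exp (-t / 2) * exp (-t / 2) := by rw [← exp_add]; ring_nf
  rw [← mul_div_mul_left _ _ (exp_pos (t / 2)).ne', sinh_eq, h2]
  congr 1
  · rw [show -(t / 2) = -t / 2 by ring]; linear_combination -(exp (-t / 2) + t) * h
  · linear_combination -h

lemma div_one_add_exp_neg_half_pos {t : ℝ} (ht : 0 < t) :
    0 < (1 - exp (-t) + t * exp (-t / 2)) / (1 + exp (-t / 2)) := by
  have : exp (-t) < 1 := exp_lt_one_iff.2 (neg_lt_zero.2 ht)
  have : 0 < t * exp (-t / 2) := by positivity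
  exact div_pos (by linarith) (by positivity)

lemma div_one_sub_exp_neg_half_pos {t : ℝ} (ht : 0 < t) :
    0 < (1 - exp (-t) - t * exp (-t / 2)) / (1 - exp (-t / 2)) := by
  rw [div_one_sub_exp_neg_half_eq]
  exact div_pos (by linarith [self_lt_sinh_iff.2 (half_pos ht)])
    (sub_pos.2 (one_lt_exp_iff.2 (half_pos ht)))

lemma div_one_add_exp_neg_half_sub_self_isBigO :
    (fun t => (1 - exp (-t) + t * exp (-t / 2)) / (1 + exp (-t / 2)) - t) =O[𝓝 0] (· ^ 2) := by
  have hnum : (fun t => exp (-t) - 1 + t) =O[𝓝 0] (· ^ 2) := by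
    refine ((exp_sub_sum_range_isBigO_pow 2).comp_tendsto (k := fun t => -t) ?_).congr
      (fun t => ?_) fun t => ?_
    · simpa using tendsto_neg (0 : ℝ)
    · simp [Finset.sum_range_succ]; ring
    · simp
  have hden : Tendsto (fun t => (1 + exp (-t / 2))⁻¹) (𝓝 0) (𝓝 (1 + exp (-0 / 2))⁻¹) :=
    ((Continuous.tendsto (by fun_prop) 0).inv₀ (by positivity))
  refine ((hden.isBigO_one ℝ).mul hnum).neg_left.congr (fun t => ?_) fun t => by simp
  field_simp
  ring

lemma two_mul_sinh_sub_sub_sq_mul_isBigO :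
    (fun x => 2 * sinh x - 2 * x - x ^ 2 / 3 * (exp x - 1)) =O[𝓝 0] (· ^ 4) := by
  set r : ℝ → ℝ := fun x => exp x - ∑ i ∈ Finset.range 4, x ^ i / i.factorial with hr
  have hr0 : r =O[𝓝 0] (· ^ 4) := exp_sub_sum_range_isBigO_pow 4
  have hr_neg : (fun x => r (-x)) =O[𝓝 0] (· ^ 4) := by
    refine (hr0.comp_tendsto ?_).congr_right fun x => by simp [Even.neg_pow (by decide : Even 4)]
    simpa using tendsto_neg (0 : ℝ)
  have hsq_mul : (fun x => x ^ 2 / 3 * r x) =O[𝓝 0] (· ^ 4) := by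
    have h : Tendsto (fun x : ℝ => x ^ 2 / 3) (𝓝 0) (𝓝 (0 ^ 2 / 3)) := by
      apply Continuous.tendsto; fun_prop
    simpa using h.isBigO_one ℝ |>.mul hr0
  have key : (fun x => 2 * sinh x - 2 * x - x ^ 2 / 3 * (exp x - 1))
      = fun x => r x - r (-x) - x ^ 2 / 3 * r x - 1 / 6 * x ^ 4 - 1 / 18 * x ^ 5 := by
    ext x
    simp only [hr, sinh_eq, Finset.sum_range_succ, Finset.sum_range_zero, Nat.factorial]
    push_cast
    ring
  rw [key]
  exact (((hr0.sub hr_neg).sub hsq_mul).sub ((isBigO_refl _ _).const_mul_left _)).sub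
    ((isLittleO_pow_pow (by norm_num : 4 < 5)).isBigO.const_mul_left _)

lemma two_mul_sinh_sub_div_exp_sub_one_sub_sq_isBigO :
    (fun x => (2 * sinh x - 2 * x) / (exp x - 1) - x ^ 2 / 3) =O[𝓝[>] 0] (· ^ 3) := by
  have hdiv : (fun x => (2 * sinh x - 2 * x - x ^ 2 / 3 * (exp x - 1)) * x⁻¹) =O[𝓝 0] (· ^ 3) :=
    (two_mul_sinh_sub_sub_sq_mul_isBigO.mul (isBigO_refl _ _)).congr_right fun x => by
      rcases eq_or_ne x 0 with rfl | hx
      · simp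
      · field_simp
  refine IsBigO.trans ?_ (hdiv.mono nhdsWithin_le_nhds)
  refine IsBigO.of_bound 1 ?_
  filter_upwards [self_mem_nhdsWithin] with x (hx : 0 < x)
  have hden : x ≤ exp x - 1 := by linarith [add_one_le_exp x]
  have heq : (2 * sinh x - 2 * x) / (exp x - 1) - x ^ 2 / 3
      = (2 * sinh x - 2 * x - x ^ 2 / 3 * (exp x - 1)) / (exp x - 1) := by
    field_simp [(hx.trans_le hden).ne']
  rw [heq, one_mul, norm_mul, norm_inv, Real.norm_of_nonneg hx.le, ← div_eq_mul_inv, norm_div,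
    Real.norm_of_nonneg (hx.trans_le hden).le]
  exact div_le_div_of_nonneg_left (norm_nonneg _) hx hden

lemma div_one_sub_exp_neg_half_sub_sq_isBigO :
    (fun t => (1 - exp (-t) - t * exp (-t / 2)) / (1 - exp (-t / 2)) - t ^ 2 / 12)
      =O[𝓝[>] 0] (· ^ 3) := by
  have hhalf : Tendsto (fun t : ℝ => t / 2) (𝓝[>] 0) (𝓝[>] 0) :=
    tendsto_nhdsWithin_iff.2
      ⟨((continuous_id.div_const 2).tendsto' 0 0 (zero_div 2)).mono_left nhdsWithin_le_nhds,
        eventually_mem_nhdsWithin.mono fun t ht => Set.mem_Ioi.2 (half_pos ht)⟩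
  refine ((two_mul_sinh_sub_div_exp_sub_one_sub_sq_isBigO.comp_tendsto hhalf).congr_left
    fun t => ?_).trans ((isBigO_refl (· ^ 3) _).const_mul_left (1 / 8) |>.congr_left fun t => ?_)
  · simp only [Function.comp_apply, div_one_sub_exp_neg_half_eq]
    ring_nf
  · simp only [Function.comp_apply]; ring

lemma tendsto_one_sub_exp_neg_add_mul_div_one_add_mul (c : ℝ) :
    Tendsto (fun t => (1 - exp (-t) + c * (t * exp (-t / 2))) / (1 + c * exp (-t / 2)))
      atTop (𝓝 1) := by
  have hdecay (s : ℝ) : Tendsto (fun t => t ^ s * exp (-t / 2)) atTop (𝓝 0) :=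
    (tendsto_rpow_mul_exp_neg_mul_atTop_nhds_zero s (1 / 2) one_half_pos).congr
      fun t => by ring_nf
  have h := (((tendsto_const_nhds (x := (1 : ℝ))).sub tendsto_exp_neg_atTop_nhds_zero).add
    ((hdecay 1).const_mul c)).div
      ((tendsto_const_nhds (x := (1 : ℝ))).add ((hdecay 0).const_mul c))
      (by norm_num : (1 : ℝ) + c * 0 ≠ 0)
  simpa [Pi.div_def] using h

end

theorem stmt6_general (u₁ u₂ : ℝ → ℝ)
    (hu₁ : ∀ t : ℝ, u₁ t =
      (1 - Real.exp (-t) + t * Real.exp (-t / 2)) / (1 + Real.exp (-t / 2)))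
    (hu₂ : ∀ t : ℝ, t ≠ 0 → u₂ t =
      (1 - Real.exp (-t) - t * Real.exp (-t / 2)) / (1 - Real.exp (-t / 2))) :
    (∀ t : ℝ, 0 < t → 0 < u₁ t) ∧ (∀ t : ℝ, 0 < t → 0 < u₂ t) ∧
    (fun t => u₁ t - t) =O[𝓝[>] (0 : ℝ)] (fun t => t ^ 2) ∧
    (fun t => u₂ t - t ^ 2 / 12) =O[𝓝[>] (0 : ℝ)] (fun t => t ^ 3) ∧
    Tendsto u₁ atTop (𝓝 1) ∧ Tendsto u₂ atTop (𝓝 1) := by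
  have hu₂_nhdsGT : ∀ᶠ t in 𝓝[>] (0 : ℝ), u₂ t =
      (1 - Real.exp (-t) - t * Real.exp (-t / 2)) / (1 - Real.exp (-t / 2)) := by
    filter_upwards [self_mem_nhdsWithin] with t ht using hu₂ t (ne_of_gt ht)
  refine ⟨fun t ht => hu₁ t ▸ div_one_add_exp_neg_half_pos ht,
    fun t ht => hu₂ t ht.ne' ▸ div_one_sub_exp_neg_half_pos ht, ?_, ?_, ?_, ?_⟩
  · simp_rw [hu₁]
    exact div_one_add_exp_neg_half_sub_self_isBigO.mono nhdsWithin_le_nhds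
  · exact div_one_sub_exp_neg_half_sub_sq_isBigO.congr'
      (hu₂_nhdsGT.mono fun t ht => by simp only [ht]) EventuallyEq.rfl
  · rw [funext hu₁]
    simpa using tendsto_one_sub_exp_neg_add_mul_div_one_add_mul 1
  · refine (tendsto_one_sub_exp_neg_add_mul_div_one_add_mul (-1)).congr' ?_
    filter_upwards [eventually_gt_atTop 0] with t ht
    rw [hu₂ t ht.ne']
    ring

/-- Positivity and asymptotics of the eigenvalue functions `u₁`, `u₂`:
both are positive on `(0,∞)`, `u₁(t) = t + O(t²)` and `u₂(t) = t²/12 + O(t³)`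
as `t → 0⁺`, and both tend to `1` at `+∞`. -/
theorem stmt6 (u₁ u₂ : ℝ → ℝ)
    (hu₁ : ∀ t : ℝ, u₁ t =
      (1 - Real.exp (-t) + t * Real.exp (-t / 2)) / (1 + Real.exp (-t / 2)))
    (hu₂0 : u₂ 0 = 0)
    (hu₂ : ∀ t : ℝ, t ≠ 0 → u₂ t =
      (1 - Real.exp (-t) - t * Real.exp (-t / 2)) / (1 - Real.exp (-t / 2))) :
    (∀ t : ℝ, 0 < t → 0 < u₁ t) ∧ (∀ t : ℝ, 0 < t → 0 < u₂ t) ∧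
    (fun t => u₁ t - t) =O[𝓝[>] (0 : ℝ)] (fun t => t ^ 2) ∧
    (fun t => u₂ t - t ^ 2 / 12) =O[𝓝[>] (0 : ℝ)] (fun t => t ^ 3) ∧
    Tendsto u₁ atTop (𝓝 1) ∧ Tendsto u₂ atTop (𝓝 1) :=
  stmt6_general u₁ u₂ hu₁ hu₂
end

section
/- For every t ≥ 0, the eigenvalues of the 4×4 matrix Ω̃(t) (defined below) are v₁(t) = 1 - e^{-t/2}(t/2 - √(1+(t/2)²)), v₂(t) = 1 - e^{-t/2}(t/2 + √(1+(t/2)²)), v₃(t) = 1 + e^{-t/2}(t/2 - √(1+(t/2)²)), v₄(t) = 1 + e^{-t/2}(t/2 + √(1+(t/2)²)); more precisely P(t)·Ω̃(t)·P(t)⁻¹ = diag(v₁(t), v₂(t), v₃(t), v₄(t)), where P(t) is the explicit orthogonal matrix built from b₊(t) = √(1+a(t)), b₋(t) = √(1-a(t)) with a(t) = (1-t/2)/√(1+(t/2)²). -/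
/-!
The matrix `P(t)` has orthonormal rows as soon as `b₊² + b₋² = 2`, so `P(t)⁻¹ = P(t)ᵀ` and it
suffices to check the intertwining relation `P Ω̃ = diag(v) P` entrywise. Writing
`s = √(1 + (t/2)²)`, that relation reduces to the two identities
`b₊ √t = b₋ (1 - t/2 + s)` and `b₋ √t = b₊ (s + t/2 - 1)`; squared, both follow from
`(s - (1 - t/2)) (s + (1 - t/2)) = t`, and for `t ≥ 0` all the quantities under the square roots
are nonnegative.
-/

open Matrix

theorem Matrix.mul_mul_inv_eq_of_mul_eq {n R : Type*} [Fintype n] [DecidableEq n] [CommRing R]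
    {P Q A D : Matrix n n R} (hPQ : P * Q = 1) (h : P * A = D * P) : P * A * P⁻¹ = D := by
  rw [inv_eq_right_inv hPQ, h, Matrix.mul_assoc, hPQ, Matrix.mul_one]

theorem Real.sqrt_mul_sqrt_eq_sqrt_mul_of_mul_eq {x y u v : ℝ} (hx : 0 ≤ x) (hy : 0 ≤ y)
    (hv : 0 ≤ v) (h : x * u = y * v ^ 2) : √x * √u = √y * v := by
  rw [← Real.sqrt_mul hx, h, Real.sqrt_mul hy, Real.sqrt_sq hv]

noncomputable def pMatrix (bp bm : ℝ) : Matrix (Fin 4) (Fin 4) ℝ :=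
  (1 / 2 : ℝ) • !![bm, -bm, -bp, -bp; bp, -bp, bm, bm; bm, bm, -bp, bp; bp, bp, bm, -bm]

/-- `Ω̃(t)` with `√t` and `e^{-t/2}` replaced by free parameters `r` and `e`. -/
def omegaMatrix (t r e : ℝ) : Matrix (Fin 4) (Fin 4) ℝ :=
  !![1, e, 0, -(r * e); e, 1, r * e, 0; 0, r * e, 1, (1 - t) * e; -(r * e), 0, (1 - t) * e, 1]

theorem pMatrix_mul_transpose {bp bm : ℝ} (h : bp ^ 2 + bm ^ 2 = 2) :
    pMatrix bp bm * (pMatrix bp bm)ᵀ = 1 := by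
  ext i j
  fin_cases i <;> fin_cases j <;> simp [pMatrix, mul_apply, Fin.sum_univ_four, one_apply] <;>
    grind

theorem pMatrix_mul_omegaMatrix {t s r e bp bm : ℝ} (h₁ : bp * r = bm * (1 - t / 2 + s))
    (h₂ : bm * r = bp * (s + t / 2 - 1)) :
    pMatrix bp bm * omegaMatrix t r e =
      diagonal ![1 - e * (t / 2 - s), 1 - e * (t / 2 + s), 1 + e * (t / 2 - s),
        1 + e * (t / 2 + s)] * pMatrix bp bm := by
  ext i j
  fin_cases i <;> fin_cases j <;>
    simp [pMatrix, omegaMatrix, mul_apply, Fin.sum_univ_four, diagonal] <;> grind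

theorem abs_one_sub_half_le_sqrt {t : ℝ} (ht : 0 ≤ t) : |1 - t / 2| ≤ √(1 + (t / 2) ^ 2) :=
  Real.abs_le_sqrt (by nlinarith)

theorem one_add_div_mul_eq {t s : ℝ} (hs : s ^ 2 = 1 + (t / 2) ^ 2) (hs₀ : s ≠ 0) :
    (1 + (1 - t / 2) / s) * t = (1 - (1 - t / 2) / s) * (1 - t / 2 + s) ^ 2 := by
  field_simp
  linear_combination (-8 * s - 8 + 4 * t) * hs

theorem one_sub_div_mul_eq {t s : ℝ} (hs : s ^ 2 = 1 + (t / 2) ^ 2) (hs₀ : s ≠ 0) :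
    (1 - (1 - t / 2) / s) * t = (1 + (1 - t / 2) / s) * (s + t / 2 - 1) ^ 2 := by
  field_simp
  linear_combination (-8 * s + 8 - 4 * t) * hs

/-- Diagonalization of `Ω̃(t)`: `P(t)·Ω̃(t)·P(t)⁻¹ = diag(v₁(t), v₂(t), v₃(t), v₄(t))`. -/
theorem stmt9 (a bp bm v₁ v₂ v₃ v₄ : ℝ → ℝ)
    (ha : ∀ t : ℝ, a t = (1 - t / 2) / Real.sqrt (1 + (t / 2) ^ 2))
    (hbp : ∀ t : ℝ, bp t = Real.sqrt (1 + a t))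
    (hbm : ∀ t : ℝ, bm t = Real.sqrt (1 - a t))
    (hv₁ : ∀ t : ℝ, v₁ t = 1 - Real.exp (-t / 2) * (t / 2 - Real.sqrt (1 + (t / 2) ^ 2)))
    (hv₂ : ∀ t : ℝ, v₂ t = 1 - Real.exp (-t / 2) * (t / 2 + Real.sqrt (1 + (t / 2) ^ 2)))
    (hv₃ : ∀ t : ℝ, v₃ t = 1 + Real.exp (-t / 2) * (t / 2 - Real.sqrt (1 + (t / 2) ^ 2)))
    (hv₄ : ∀ t : ℝ, v₄ t = 1 + Real.exp (-t / 2) * (t / 2 + Real.sqrt (1 + (t / 2) ^ 2)))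
    (P Ω : ℝ → Matrix (Fin 4) (Fin 4) ℝ)
    (hP : ∀ t : ℝ, P t = (1 / 2 : ℝ) •
      !![bm t, -bm t, -bp t, -bp t;
         bp t, -bp t, bm t, bm t;
         bm t, bm t, -bp t, bp t;
         bp t, bp t, bm t, -bm t])
    (hΩ : ∀ t : ℝ, Ω t =
      !![1, Real.exp (-t / 2), 0, -(Real.sqrt t * Real.exp (-t / 2));
         Real.exp (-t / 2), 1, Real.sqrt t * Real.exp (-t / 2), 0;
         0, Real.sqrt t * Real.exp (-t / 2), 1, (1 - t) * Real.exp (-t / 2);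
         -(Real.sqrt t * Real.exp (-t / 2)), 0, (1 - t) * Real.exp (-t / 2), 1]) :
    ∀ t : ℝ, 0 ≤ t →
      P t * Ω t * (P t)⁻¹ = Matrix.diagonal ![v₁ t, v₂ t, v₃ t, v₄ t] := by
  intro t ht
  set s := √(1 + (t / 2) ^ 2)
  have hs₀ : 0 < s := Real.sqrt_pos.mpr (by positivity)
  have hs : s ^ 2 = 1 + (t / 2) ^ 2 := Real.sq_sqrt (by positivity)
  have hts : |1 - t / 2| ≤ s := abs_one_sub_half_le_sqrt ht
  have hat : |a t| ≤ 1 := by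
    rwa [ha t, abs_div, abs_of_pos hs₀, div_le_one hs₀]
  obtain ⟨hts₁, hts₂⟩ := abs_le.mp hts
  obtain ⟨ha₁, ha₂⟩ := abs_le.mp hat
  have horth : pMatrix (bp t) (bm t) * (pMatrix (bp t) (bm t))ᵀ = 1 := by
    refine pMatrix_mul_transpose ?_
    rw [hbp, hbm, Real.sq_sqrt (by linarith), Real.sq_sqrt (by linarith)]
    ring
  have h₁ : bp t * √t = bm t * (1 - t / 2 + s) := by
    rw [hbp, hbm]
    refine Real.sqrt_mul_sqrt_eq_sqrt_mul_of_mul_eq (by linarith) (by linarith) (by linarith) ?_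
    rw [ha t]
    exact one_add_div_mul_eq hs hs₀.ne'
  have h₂ : bm t * √t = bp t * (s + t / 2 - 1) := by
    rw [hbp, hbm]
    refine Real.sqrt_mul_sqrt_eq_sqrt_mul_of_mul_eq (by linarith) (by linarith) (by linarith) ?_
    rw [ha t]
    exact one_sub_div_mul_eq hs hs₀.ne'
  rw [hP t, hΩ t, hv₁ t, hv₂ t, hv₃ t, hv₄ t]
  exact mul_mul_inv_eq_of_mul_eq horth (pMatrix_mul_omegaMatrix h₁ h₂)
end

section
/- For fixed n ≥ 1, define F_d(t) = (1 + t/d)^{-d}·((1 + t/d - t)² + (n-1)(1 + t/d) - 2nt + n²) for d ∈ ℕ*, t ≥ 0. Then as d → ∞, ∫₀^∞ F_d(t)·t^{(n-2)/2}·(1 + t/d)^{-(n+1)/2} dt converges to ∫₀^∞ (t² - 2t(n+1) + n(n+1))·t^{(n-2)/2}·e^{-t} dt = Γ(n/2 + 2). -/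
open Filter Topology MeasureTheory Set

lemma aux_pow_mono {d₀ d : ℕ} (h0 : 0 < d₀) (h : d₀ ≤ d) {t : ℝ} (ht : 0 ≤ t) :
    ((1 : ℝ) + t / d₀) ^ d₀ ≤ (1 + t / d) ^ d := by
  have hd : 0 < d := h0.trans_le h
  have hd0' : (0:ℝ) < d₀ := Nat.cast_pos.2 h0
  have hd' : (0:ℝ) < d := Nat.cast_pos.2 hd
  have hs : (0:ℝ) ≤ t / d := div_nonneg ht hd'.le
  have hp : (1:ℝ) ≤ (d:ℝ) / d₀ := (one_le_div hd0').2 (Nat.cast_le.2 h)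
  have hb : 1 + ((d:ℝ)/d₀) * (t/d) ≤ (1 + t/d) ^ ((d:ℝ)/d₀) :=
    one_add_mul_self_le_rpow_one_add (by linarith) hp
  have key : ((d:ℝ)/d₀) * (t/d) = t / d₀ := by field_simp
  rw [key] at hb
  have h1 : ((1:ℝ) + t/d₀) ^ (d₀:ℝ) ≤ ((1 + t/d) ^ ((d:ℝ)/d₀)) ^ (d₀:ℝ) :=
    Real.rpow_le_rpow (by positivity) hb (Nat.cast_nonneg _)
  rw [← Real.rpow_natCast ((1:ℝ) + t/(d₀:ℝ)) d₀, ← Real.rpow_natCast ((1:ℝ) + t/(d:ℝ)) d]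
  refine h1.trans_eq ?_
  rw [← Real.rpow_mul (by positivity : (0:ℝ) ≤ 1 + t/(d:ℝ))]
  congr 1
  field_simp


lemma aux_f_cont (n : ℕ) : ContinuousOn
    (fun t : ℝ => (((1:ℝ) + t / ((n:ℝ)+3)) ^ (n+3))⁻¹ *
      ((1+2*t)^2 + (n:ℝ)*(1+t) + 2*(n:ℝ)*t + (n:ℝ)^2)) (Ioi 0) := by
  have hc : Continuous fun t : ℝ => ((1:ℝ) + t / ((n:ℝ)+3)) ^ (n+3) := by fun_prop
  refine (hc.continuousOn.inv₀ fun t ht => ?_).mul (by fun_prop)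
  have h0 : (0:ℝ) < 1 + t / ((n:ℝ)+3) := by
    have : 0 ≤ t / ((n:ℝ)+3) := div_nonneg (le_of_lt ht) (by positivity)
    linarith
  exact ne_of_gt (pow_pos h0 _)

lemma aux_bound_integrable (n : ℕ) (hn : 1 ≤ n) :
    IntegrableOn (fun t : ℝ => t ^ ((n:ℝ)/2 - 1) *
      ((((1:ℝ) + t / ((n:ℝ)+3)) ^ (n+3))⁻¹ *
        ((1+2*t)^2 + (n:ℝ)*(1+t) + 2*(n:ℝ)*t + (n:ℝ)^2))) (Ioi 0) := by
  have hn' : (1:ℝ) ≤ n := by exact_mod_cast hn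
  set f : ℝ → ℝ := fun t => (((1:ℝ) + t / ((n:ℝ)+3)) ^ (n+3))⁻¹ *
      ((1+2*t)^2 + (n:ℝ)*(1+t) + 2*(n:ℝ)*t + (n:ℝ)^2) with hf
  have hfc : LocallyIntegrableOn f (Ioi 0) :=
    (aux_f_cont n).locallyIntegrableOn measurableSet_Ioi
  have hf_top : f =O[atTop] (· ^ (-((n:ℝ)+1))) := by
    refine Asymptotics.IsBigO.of_bound (((n:ℝ)+3)^(n+3) * (9 + 4*(n:ℝ) + (n:ℝ)^2)) ?_
    filter_upwards [eventually_ge_atTop (1:ℝ)] with t ht1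
    have ht0 : (0:ℝ) < t := lt_of_lt_of_le one_pos ht1
    have cpos : (0:ℝ) < (n:ℝ)+3 := by positivity
    have hP : (1+2*t)^2 + (n:ℝ)*(1+t) + 2*(n:ℝ)*t + (n:ℝ)^2
        ≤ (9 + 4*(n:ℝ) + (n:ℝ)^2) * t^2 := by
      have hnn : (0:ℝ) ≤ n := by positivity
      nlinarith [mul_nonneg hnn (by nlinarith : (0:ℝ) ≤ t^2 - 1),
        mul_nonneg hnn (by nlinarith : (0:ℝ) ≤ t^2 - t),
        mul_nonneg (mul_nonneg hnn hnn) (by nlinarith : (0:ℝ) ≤ t^2 - 1)]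
    have h1 : (t/((n:ℝ)+3))^(n+3) ≤ ((1:ℝ) + t/((n:ℝ)+3))^(n+3) := by
      apply pow_le_pow_left₀ (div_nonneg ht0.le cpos.le)
      linarith
    have h2 : (((1:ℝ) + t/((n:ℝ)+3))^(n+3))⁻¹ ≤ ((t/((n:ℝ)+3))^(n+3))⁻¹ :=
      inv_anti₀ (pow_pos (div_pos ht0 cpos) _) h1
    have h3 : ((t/((n:ℝ)+3))^(n+3))⁻¹ = ((n:ℝ)+3)^(n+3) * (t^(n+3))⁻¹ := by
      rw [div_pow, inv_div, div_eq_mul_inv]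
    have hPnn : (0:ℝ) ≤ (1+2*t)^2 + (n:ℝ)*(1+t) + 2*(n:ℝ)*t + (n:ℝ)^2 := by nlinarith
    have hfle : f t ≤ (((n:ℝ)+3)^(n+3) * (t^(n+3))⁻¹) * ((9 + 4*(n:ℝ) + (n:ℝ)^2) * t^2) := by
      rw [hf]
      exact mul_le_mul (h3 ▸ h2) hP hPnn (by positivity)
    have hnorm : ‖t ^ (-((n:ℝ)+1))‖ = (t^(n+1:ℕ))⁻¹ := by
      rw [Real.norm_eq_abs, abs_of_nonneg (Real.rpow_nonneg ht0.le _), Real.rpow_neg ht0.le,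
        show ((n:ℝ)+1) = ((n+1:ℕ):ℝ) by push_cast; ring, Real.rpow_natCast]
    have hfnn : 0 ≤ f t := by
      rw [hf]
      have h0 : (0:ℝ) < 1 + t / ((n:ℝ)+3) := by
        have : 0 ≤ t / ((n:ℝ)+3) := div_nonneg ht0.le cpos.le
        linarith
      exact mul_nonneg (inv_nonneg.2 (pow_nonneg h0.le _)) hPnn
    rw [Real.norm_eq_abs, abs_of_nonneg hfnn, hnorm]
    refine hfle.trans (le_of_eq ?_)
    have htm : t ^ (n+3) = t^(n+1) * t^2 := by ring
    field_simp [htm]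
    ring
  have hf_bot : f =O[𝓝[>] (0:ℝ)] (· ^ (-(0:ℝ))) := by
    refine Asymptotics.IsBigO.of_bound (9 + 4*(n:ℝ) + (n:ℝ)^2) ?_
    filter_upwards [Ioc_mem_nhdsGT_of_mem (Set.mem_Ico.2 ⟨le_refl (0:ℝ), one_pos⟩)]
      with t ht
    obtain ⟨ht0, ht1⟩ := ht
    have cpos : (0:ℝ) < (n:ℝ)+3 := by positivity
    have h0 : (0:ℝ) < 1 + t / ((n:ℝ)+3) := by
      have : 0 ≤ t / ((n:ℝ)+3) := div_nonneg ht0.le cpos.le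
      linarith
    have hPnn : (0:ℝ) ≤ (1+2*t)^2 + (n:ℝ)*(1+t) + 2*(n:ℝ)*t + (n:ℝ)^2 := by nlinarith
    have h2 : (((1:ℝ) + t/((n:ℝ)+3))^(n+3))⁻¹ ≤ 1 := by
      have : 0 ≤ t / ((n:ℝ)+3) := div_nonneg ht0.le cpos.le
      exact inv_le_one_of_one_le₀ (one_le_pow₀ (by linarith))
    have hfnn : 0 ≤ f t := mul_nonneg (inv_nonneg.2 (pow_nonneg h0.le _)) hPnn
    rw [Real.norm_eq_abs, abs_of_nonneg hfnn, neg_zero, Real.rpow_zero, norm_one, mul_one]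
    calc f t ≤ 1 * ((1+2*t)^2 + (n:ℝ)*(1+t) + 2*(n:ℝ)*t + (n:ℝ)^2) :=
          mul_le_mul_of_nonneg_right h2 hPnn
      _ ≤ 9 + 4*(n:ℝ) + (n:ℝ)^2 := by nlinarith
  have := mellin_convergent_of_isBigO_scalar (s := (n:ℝ)/2) hfc hf_top
    (by linarith) hf_bot (by positivity)
  simpa using this

lemma aux_gamma (n : ℕ) (hn : 1 ≤ n) :
    ∫ t in Set.Ioi (0 : ℝ),
        (t ^ 2 - 2 * t * ((n : ℝ) + 1) + (n : ℝ) * ((n : ℝ) + 1)) *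
          t ^ (((n : ℝ) - 2) / 2) * Real.exp (-t)
      = Real.Gamma ((n : ℝ) / 2 + 2) := by
  have hn' : (1:ℝ) ≤ n := by exact_mod_cast hn
  set s : ℝ := (n:ℝ)/2 with hs
  have hs0 : 0 < s := by positivity
  have hs1 : 0 < s + 1 := by linarith
  have hs2 : 0 < s + 2 := by linarith
  have I0 := Real.GammaIntegral_convergent hs0
  have I1 := Real.GammaIntegral_convergent hs1
  have I2 := Real.GammaIntegral_convergent hs2
  have hcong : ∀ t ∈ Ioi (0:ℝ),
      (t ^ 2 - 2 * t * ((n : ℝ) + 1) + (n : ℝ) * ((n : ℝ) + 1)) *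
          t ^ (((n : ℝ) - 2) / 2) * Real.exp (-t)
      = (Real.exp (-t) * t ^ (s + 2 - 1)
          - (2 * ((n:ℝ)+1)) * (Real.exp (-t) * t ^ (s + 1 - 1))
          + ((n:ℝ) * ((n:ℝ)+1)) * (Real.exp (-t) * t ^ (s - 1))) := by
    intro t ht
    have ht' : (0:ℝ) < t := ht
    have e0 : (((n:ℝ)-2)/2) = s - 1 := by rw [hs]; ring
    have e2 : t ^ (s + 2 - 1) = t ^ (s - 1) * t ^ 2 := by
      rw [show s + 2 - 1 = (s - 1) + ((2:ℕ):ℝ) by push_cast; ring,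
        Real.rpow_add ht', Real.rpow_natCast]
    have e1 : t ^ (s + 1 - 1) = t ^ (s - 1) * t := by
      rw [show s + 1 - 1 = (s - 1) + 1 by ring, Real.rpow_add ht', Real.rpow_one]
    rw [e0, e2, e1]; ring
  rw [setIntegral_congr_fun measurableSet_Ioi hcong]
  have I1' : IntegrableOn (fun x => 2 * ((n:ℝ)+1) * (Real.exp (-x) * x ^ (s + 1 - 1))) (Ioi 0) :=
    I1.const_mul _
  have I0' : IntegrableOn (fun x => (n:ℝ) * ((n:ℝ)+1) * (Real.exp (-x) * x ^ (s - 1))) (Ioi 0) :=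
    I0.const_mul _
  have Isub : IntegrableOn (fun x => Real.exp (-x) * x ^ (s + 2 - 1)
      - 2 * ((n:ℝ)+1) * (Real.exp (-x) * x ^ (s + 1 - 1))) (Ioi 0) := I2.sub I1'
  rw [integral_add Isub I0', integral_sub I2 I1', integral_const_mul, integral_const_mul,
    ← Real.Gamma_eq_integral hs0, ← Real.Gamma_eq_integral hs1, ← Real.Gamma_eq_integral hs2]
  have hG1 : Real.Gamma (s + 1) = s * Real.Gamma s := Real.Gamma_add_one hs0.ne'
  rw [hG1]
  have h2s : (n:ℝ) = 2 * s := by rw [hs]; ring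
  have hG2 : Real.Gamma (s + 2) = Real.Gamma ((n:ℝ)/2 + 2) := by rw [hs]
  rw [hG2]
  linear_combination ((n:ℝ)+1) * Real.Gamma s * h2s

/-- Dominated convergence for the second-chaos integral: as `d → ∞`,
`∫₀^∞ F_d(t) t^{(n-2)/2} (1+t/d)^{-(n+1)/2} dt → Γ(n/2+2)`, where
`F_d(t) = (1+t/d)^{-d}((1+t/d-t)² + (n-1)(1+t/d) - 2nt + n²)`. -/
theorem stmt18 (n : ℕ) (hn : 1 ≤ n) (F : ℕ → ℝ → ℝ)
    (hF : ∀ (d : ℕ) (t : ℝ), F d t =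
      ((1 + t / (d : ℝ)) ^ d)⁻¹ *
        ((1 + t / (d : ℝ) - t) ^ 2 + ((n : ℝ) - 1) * (1 + t / (d : ℝ))
          - 2 * (n : ℝ) * t + (n : ℝ) ^ 2)) :
    Tendsto
      (fun d : ℕ => ∫ t in Set.Ioi (0 : ℝ),
        F d t * t ^ (((n : ℝ) - 2) / 2) * (1 + t / (d : ℝ)) ^ (-((n : ℝ) + 1) / 2))
      atTop
      (𝓝 (∫ t in Set.Ioi (0 : ℝ),
        (t ^ 2 - 2 * t * ((n : ℝ) + 1) + (n : ℝ) * ((n : ℝ) + 1)) *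
          t ^ (((n : ℝ) - 2) / 2) * Real.exp (-t))) ∧
    ∫ t in Set.Ioi (0 : ℝ),
        (t ^ 2 - 2 * t * ((n : ℝ) + 1) + (n : ℝ) * ((n : ℝ) + 1)) *
          t ^ (((n : ℝ) - 2) / 2) * Real.exp (-t)
      = Real.Gamma ((n : ℝ) / 2 + 2) := by
  constructor
  · have hn' : (1:ℝ) ≤ n := by exact_mod_cast hn
    have hbi := aux_bound_integrable n hn
    rw [show (n:ℝ)/2 - 1 = ((n:ℝ)-2)/2 by ring] at hbi
    refine tendsto_integral_filter_of_dominated_convergence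
      (fun t : ℝ => t ^ (((n:ℝ)-2)/2) *
        ((((1:ℝ) + t / ((n:ℝ)+3)) ^ (n+3))⁻¹ *
          ((1+2*t)^2 + (n:ℝ)*(1+t) + 2*(n:ℝ)*t + (n:ℝ)^2)))
      ?_ ?_ hbi ?_
    · -- measurability
      refine Eventually.of_forall fun d => ?_
      have heq : (fun t : ℝ => F d t * t ^ (((n:ℝ)-2)/2) * (1 + t/(d:ℝ)) ^ (-((n:ℝ)+1)/2))
          = fun t : ℝ => (((1 + t / (d:ℝ)) ^ d)⁻¹ *
              ((1 + t/(d:ℝ) - t)^2 + ((n:ℝ)-1)*(1 + t/(d:ℝ)) - 2*(n:ℝ)*t + (n:ℝ)^2))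
            * t ^ (((n:ℝ)-2)/2) * (1 + t/(d:ℝ)) ^ (-((n:ℝ)+1)/2) := by
        funext t; rw [hF]
      rw [heq]
      refine ContinuousOn.aestronglyMeasurable (fun t ht => ?_) measurableSet_Ioi
      have ht0 : (0:ℝ) < t := ht
      have hb : (0:ℝ) < 1 + t / d := by
        have : 0 ≤ t / (d:ℝ) := div_nonneg ht0.le (Nat.cast_nonneg d)
        linarith
      have c1 : ContinuousAt (fun t : ℝ => ((1 + t / (d:ℝ)) ^ d)⁻¹) t :=
        ((by fun_prop : Continuous fun t : ℝ => (1 + t / (d:ℝ)) ^ d).continuousAt).inv₀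
          (ne_of_gt (pow_pos hb d))
      have c2 : ContinuousAt (fun t : ℝ =>
          (1 + t/(d:ℝ) - t)^2 + ((n:ℝ)-1)*(1 + t/(d:ℝ)) - 2*(n:ℝ)*t + (n:ℝ)^2) t :=
        (by fun_prop : Continuous _).continuousAt
      have c3 : ContinuousAt (fun t : ℝ => t ^ (((n:ℝ)-2)/2)) t :=
        continuousAt_id.rpow_const (Or.inl ht0.ne')
      have c4 : ContinuousAt (fun t : ℝ => (1 + t/(d:ℝ)) ^ (-((n:ℝ)+1)/2)) t :=
        ((by fun_prop : Continuous fun t : ℝ => 1 + t / (d:ℝ)).continuousAt).rpow_const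
          (Or.inl (ne_of_gt hb))
      exact (((c1.mul c2).mul c3).mul c4).continuousWithinAt
    · -- bound
      filter_upwards [eventually_ge_atTop (n+3)] with d hd
      refine (ae_restrict_iff' measurableSet_Ioi).2 (ae_of_all _ fun t ht => ?_)
      have ht0 : (0:ℝ) < t := ht
      have hd1 : 1 ≤ d := le_trans (by omega) hd
      have hdpos : (0:ℝ) < d := by exact_mod_cast Nat.lt_of_lt_of_le (by omega) hd
      have hu0 : (0:ℝ) ≤ t / d := div_nonneg ht0.le hdpos.le
      have hu_le : t / d ≤ t := by
        rw [div_le_iff₀ hdpos]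
        nlinarith [hdpos, (show (1:ℝ) ≤ (d:ℝ) by exact_mod_cast hd1)]
      have hb : (0:ℝ) < 1 + t / d := by linarith
      have hb3 : (0:ℝ) < 1 + t / ((n:ℝ)+3) := by
        have : 0 ≤ t / ((n:ℝ)+3) := div_nonneg ht0.le (by positivity)
        linarith
      have hmono : ((1:ℝ) + t / ((n:ℝ)+3)) ^ (n+3) ≤ (1 + t/(d:ℝ)) ^ d := by
        have := aux_pow_mono (d₀ := n+3) (d := d) (by omega) hd ht0.le
        rwa [show (((n+3 : ℕ)):ℝ) = (n:ℝ)+3 by push_cast; ring] at this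
      have hinvle : ((1 + t/(d:ℝ)) ^ d)⁻¹ ≤ (((1:ℝ) + t / ((n:ℝ)+3)) ^ (n+3))⁻¹ :=
        inv_anti₀ (pow_pos hb3 _) hmono
      -- bound on the polynomial factor
      have hsq : (1 + t/(d:ℝ) - t)^2 ≤ (1 + 2*t)^2 := by
        nlinarith [mul_nonneg (show (0:ℝ) ≤ 2 + t + t/d by linarith)
          (show (0:ℝ) ≤ 3*t - t/d by linarith)]
      have h5 : ((n:ℝ)-1)*(1 + t/(d:ℝ)) ≤ (n:ℝ)*(1+t) := by
        nlinarith [mul_nonneg (show (0:ℝ) ≤ (n:ℝ)-1 by linarith)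
          (show (0:ℝ) ≤ t - t/d by linarith)]
      have hnt : (0:ℝ) ≤ (n:ℝ)*t := by positivity
      have hpolyabs : |(1 + t/(d:ℝ) - t)^2 + ((n:ℝ)-1)*(1 + t/(d:ℝ)) - 2*(n:ℝ)*t + (n:ℝ)^2|
          ≤ (1+2*t)^2 + (n:ℝ)*(1+t) + 2*(n:ℝ)*t + (n:ℝ)^2 := by
        rw [abs_le]
        constructor
        · nlinarith [sq_nonneg (1 + t/(d:ℝ) - t), sq_nonneg (1+2*t),
            mul_nonneg (show (0:ℝ) ≤ (n:ℝ)-1 by linarith) (show (0:ℝ) ≤ 1 + t/d by linarith)]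
        · linarith
      have hFle : |F d t| ≤ (((1:ℝ) + t / ((n:ℝ)+3)) ^ (n+3))⁻¹ *
          ((1+2*t)^2 + (n:ℝ)*(1+t) + 2*(n:ℝ)*t + (n:ℝ)^2) := by
        rw [hF, abs_mul, abs_of_nonneg (inv_nonneg.2 (pow_nonneg hb.le d))]
        exact mul_le_mul hinvle hpolyabs (abs_nonneg _) (inv_nonneg.2 (pow_nonneg hb3.le _))
      have hr1 : (1 + t/(d:ℝ)) ^ (-((n:ℝ)+1)/2) ≤ 1 := by
        apply Real.rpow_le_one_of_one_le_of_nonpos (by linarith)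
        rw [neg_div]
        have : (0:ℝ) ≤ ((n:ℝ)+1)/2 := by positivity
        linarith
      have htp : (0:ℝ) ≤ t ^ (((n:ℝ)-2)/2) := Real.rpow_nonneg ht0.le _
      have hrnn : (0:ℝ) ≤ (1 + t/(d:ℝ)) ^ (-((n:ℝ)+1)/2) := Real.rpow_nonneg hb.le _
      have hBnn : (0:ℝ) ≤ (((1:ℝ) + t / ((n:ℝ)+3)) ^ (n+3))⁻¹ *
          ((1+2*t)^2 + (n:ℝ)*(1+t) + 2*(n:ℝ)*t + (n:ℝ)^2) :=
        le_trans (abs_nonneg _) hFle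
      calc ‖F d t * t ^ (((n:ℝ)-2)/2) * (1 + t/(d:ℝ)) ^ (-((n:ℝ)+1)/2)‖
          = |F d t| * t ^ (((n:ℝ)-2)/2) * (1 + t/(d:ℝ)) ^ (-((n:ℝ)+1)/2) := by
            rw [Real.norm_eq_abs, abs_mul, abs_mul, abs_of_nonneg htp, abs_of_nonneg hrnn]
        _ ≤ ((((1:ℝ) + t / ((n:ℝ)+3)) ^ (n+3))⁻¹ *
              ((1+2*t)^2 + (n:ℝ)*(1+t) + 2*(n:ℝ)*t + (n:ℝ)^2)) * t ^ (((n:ℝ)-2)/2) * 1 := by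
            refine mul_le_mul (mul_le_mul hFle le_rfl htp hBnn) hr1 hrnn ?_
            exact mul_nonneg hBnn htp
        _ = t ^ (((n:ℝ)-2)/2) * ((((1:ℝ) + t / ((n:ℝ)+3)) ^ (n+3))⁻¹ *
              ((1+2*t)^2 + (n:ℝ)*(1+t) + 2*(n:ℝ)*t + (n:ℝ)^2)) := by ring
    · -- pointwise limit
      refine (ae_restrict_iff' measurableSet_Ioi).2 (ae_of_all _ fun t ht => ?_)
      have ht0 : (0:ℝ) < t := ht
      have h0 : Tendsto (fun d : ℕ => t/(d:ℝ)) atTop (𝓝 0) :=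
        tendsto_const_div_atTop_nhds_zero_nat t
      have hbase : Tendsto (fun d : ℕ => 1 + t/(d:ℝ)) atTop (𝓝 1) := by
        simpa using (tendsto_const_nhds (x := (1:ℝ))).add h0
      have hpow := Real.tendsto_one_add_div_pow_exp t
      have hinv : Tendsto (fun d : ℕ => ((1 + t/(d:ℝ)) ^ d)⁻¹) atTop (𝓝 (Real.exp t)⁻¹) :=
        hpow.inv₀ (Real.exp_ne_zero t)
      have hb2 : Tendsto (fun d : ℕ => 1 + t/(d:ℝ) - t) atTop (𝓝 (1 - t)) :=
        hbase.sub tendsto_const_nhds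
      have hpoly : Tendsto (fun d : ℕ =>
          (1 + t/(d:ℝ) - t)^2 + ((n:ℝ)-1)*(1 + t/(d:ℝ)) - 2*(n:ℝ)*t + (n:ℝ)^2) atTop
          (𝓝 ((1 - t)^2 + ((n:ℝ)-1)*1 - 2*(n:ℝ)*t + (n:ℝ)^2)) :=
        (((hb2.pow 2).add (hbase.const_mul ((n:ℝ)-1))).sub tendsto_const_nhds).add
          tendsto_const_nhds
      have hr : Tendsto (fun d : ℕ => (1 + t/(d:ℝ)) ^ (-((n:ℝ)+1)/2)) atTop (𝓝 1) := by
        have := hbase.rpow_const (p := -((n:ℝ)+1)/2) (Or.inl one_ne_zero)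
        simpa using this
      have hall := ((hinv.mul hpoly).mul
        (tendsto_const_nhds (x := t ^ (((n:ℝ)-2)/2)))).mul hr
      have hval : (Real.exp t)⁻¹ * ((1 - t)^2 + ((n:ℝ)-1)*1 - 2*(n:ℝ)*t + (n:ℝ)^2)
            * t ^ (((n:ℝ)-2)/2) * 1
          = (t ^ 2 - 2 * t * ((n:ℝ)+1) + (n:ℝ)*((n:ℝ)+1)) * t ^ (((n:ℝ)-2)/2)
            * Real.exp (-t) := by
        rw [Real.exp_neg]; ring
      rw [← hval]
      refine Tendsto.congr (fun d => ?_) hall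
      rw [hF]
  · exact aux_gamma n hn
end
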